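/- Let H₀, H₁, H₂ be complex Hilbert spaces, T : H₀ → H₁ and S : H₁ → H₂ closed, densely defined (possibly unbounded) linear operators with range(T) ⊆ ker(S) (i.e. ST = 0 on Dom(T)). Let α ∈ H₁ with S(α) = 0 and let C > 0. Then there exists v ∈ Dom(T) with T(v) = α and ‖v‖ ≤ C if and only if |⟨u, α⟩|² ≤ C²(‖T*u‖² + ‖Su‖²) for all u ∈ Dom(T*) ∩ Dom(S). -/

import Mathlib

/-!
Necessity is Cauchy–Schwarz: `⟪u, α⟫ = ⟪T† u, v⟫`. For sufficiency, replacing `u` by its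
orthogonal projection onto the closed subspace `ker S ⊇ range T` changes neither `⟪u, α⟫` nor
`T† u` (because `(range T)ᗮ ⊆ ker T†`) and kills `S u`, so the hypothesis becomes
`‖⟪u, α⟫‖ ≤ C ‖T† u‖` on all of `Dom T†`. Hence `T† u ↦ ⟪α, u⟫` is a well-defined functional of
norm at most `C` on `range T†`; Hahn–Banach and Riesz turn it into `v` with `‖v‖ ≤ C` and
`⟪v, T† u⟫ = ⟪α, u⟫` for all `u`, which says that `(v, α)` lies in the graph of `T†† = T`.
-/

theorem StrongDual.exists_comp_eq_of_norm_le {𝕜 M F : Type*} [RCLike 𝕜] [AddCommGroup M]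
    [Module 𝕜 M] [NormedAddCommGroup F] [NormedSpace 𝕜 F] (A : M →ₗ[𝕜] F) (f : M →ₗ[𝕜] 𝕜)
    {C : ℝ} (hC : 0 ≤ C) (h : ∀ x, ‖f x‖ ≤ C * ‖A x‖) :
    ∃ g : StrongDual 𝕜 F, ‖g‖ ≤ C ∧ ∀ x, g (A x) = f x := by
  have hker : LinearMap.ker A ≤ LinearMap.ker f := fun x hx => by
    simpa [LinearMap.mem_ker.1 hx] using h x
  set φ : LinearMap.range A →ₗ[𝕜] 𝕜 :=
    (LinearMap.ker A).liftQ f hker ∘ₗ A.quotKerEquivRange.symm.toLinearMap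
  have hφ : ∀ x, φ (A.rangeRestrict x) = f x := fun x => by
    have hx : A.quotKerEquivRange.symm (A.rangeRestrict x) = (LinearMap.ker A).mkQ x :=
      A.quotKerEquivRange.symm_apply_eq.2 (Subtype.ext (A.quotKerEquivRange_apply_mk x).symm)
    simp only [φ, LinearMap.comp_apply, LinearEquiv.coe_coe, hx, Submodule.mkQ_apply,
      Submodule.liftQ_apply]
  have hφ_le : ∀ w, ‖φ w‖ ≤ C * ‖w‖ := by
    rintro ⟨_, x, rfl⟩
    exact (hφ x).symm ▸ h x
  obtain ⟨g, hg, hg_norm⟩ := exists_extension_norm_eq _ (φ.mkContinuous C hφ_le)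
  exact ⟨g, hg_norm ▸ LinearMap.mkContinuous_norm_le _ hC hφ_le,
    fun x => (hg (A.rangeRestrict x)).trans (hφ x)⟩

namespace LinearPMap

theorem mem_graph_comap_inl_iff {R E F : Type*} [Ring R] [AddCommGroup E] [Module R E]
    [AddCommGroup F] [Module R F] (S : E →ₗ.[R] F) (y : E) :
    y ∈ S.graph.comap (LinearMap.inl R E F) ↔ ∃ hy : y ∈ S.domain, S ⟨y, hy⟩ = 0 := by
  simp only [Submodule.mem_comap, LinearMap.inl_apply, mem_graph_iff]
  exact ⟨fun ⟨⟨z, hz⟩, hzy, hSz⟩ => ⟨hzy ▸ hz, by subst hzy; exact hSz⟩,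
    fun ⟨hy, hSy⟩ => ⟨⟨y, hy⟩, rfl, hSy⟩⟩

variable {𝕜 E F : Type*} [RCLike 𝕜]
  [NormedAddCommGroup E] [InnerProductSpace 𝕜 E] [CompleteSpace E]
  [NormedAddCommGroup F] [InnerProductSpace 𝕜 F]
  {T : E →ₗ.[𝕜] F}

local notation "⟪" x ", " y "⟫" => inner 𝕜 x y

theorem exists_mem_adjoint_domain_apply_eq (hT : Dense (T.domain : Set E)) {x : E} {y : F}
    (h : ∀ a : T.domain, ⟪x, a⟫ = ⟪y, T a⟫) : ∃ hy : y ∈ T†.domain, T† ⟨y, hy⟩ = x :=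
  ⟨mem_adjoint_domain_of_exists y ⟨x, h⟩, adjoint_apply_eq hT _ h⟩

/-- For closed `T` this is `T†† = T`: the graph of `T` is the orthogonal complement of
`{(-T† u, u)}` in `E × F`. -/
theorem mem_graph_of_inner_adjoint_eq [CompleteSpace F] (hT : Dense (T.domain : Set E))
    (hTc : T.IsClosed) {x : E} {y : F} (h : ∀ u : T†.domain, ⟪x, T† u⟫ = ⟪y, (u : F)⟫) :
    (x, y) ∈ T.graph := by
  set G : Submodule 𝕜 (WithLp 2 (E × F)) :=
    T.graph.comap (WithLp.linearEquiv 2 𝕜 (E × F)).toLinearMap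
  have : CompleteSpace G :=
    (hTc.preimage (WithLp.prod_continuous_ofLp 2 E F)).completeSpace_coe
  suffices WithLp.toLp 2 (x, y) ∈ Gᗮᗮ by rwa [G.orthogonal_orthogonal] at this
  intro q hq
  obtain ⟨hq₂, hTq⟩ : ∃ hq₂ : q.snd ∈ T†.domain, T† ⟨q.snd, hq₂⟩ = -q.fst := by
    refine exists_mem_adjoint_domain_apply_eq hT fun a => ?_
    have := inner_eq_zero_symm.1 (hq (WithLp.toLp 2 ((a : E), T a)) (T.mem_graph a))
    simp only [WithLp.prod_inner_apply, WithLp.ofLp_fst, WithLp.ofLp_snd, inner_neg_left]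
      at this ⊢
    linear_combination -this
  have := h ⟨q.snd, hq₂⟩
  rw [hTq, inner_neg_right] at this
  refine inner_eq_zero_symm.1 ?_
  simp only [WithLp.prod_inner_apply, WithLp.ofLp_fst, WithLp.ofLp_snd]
  linear_combination -this

theorem exists_apply_eq_and_norm_le_iff [CompleteSpace F] (hT : Dense (T.domain : Set E))
    (hTc : T.IsClosed) (y : F) {C : ℝ} (hC : 0 ≤ C) :
    (∃ v : T.domain, T v = y ∧ ‖(v : E)‖ ≤ C) ↔
      ∀ u : T†.domain, ‖⟪(u : F), y⟫‖ ≤ C * ‖T† u‖ := by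
  constructor
  · rintro ⟨v, rfl, hv⟩ u
    calc ‖⟪(u : F), T v⟫‖ = ‖⟪T† u, (v : E)⟫‖ := by rw [adjoint_isFormalAdjoint hT u v]
      _ ≤ ‖T† u‖ * ‖(v : E)‖ := norm_inner_le_norm _ _
      _ ≤ C * ‖T† u‖ := by rw [mul_comm]; gcongr
  · intro h
    obtain ⟨g, hg_norm, hg⟩ := StrongDual.exists_comp_eq_of_norm_le T†.toFun
      (innerₛₗ 𝕜 y ∘ₗ T†.domain.subtype) hC fun u => by
        simpa [norm_inner_symm y] using h u
    set x := (InnerProductSpace.toDual 𝕜 E).symm g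
    obtain ⟨v, hvx, hvy⟩ := (mem_graph_iff T).1 <| mem_graph_of_inner_adjoint_eq hT hTc
      (x := x) fun u => by simpa [x] using hg u
    refine ⟨v, hvy, ?_⟩
    rwa [hvx, LinearIsometryEquiv.norm_map]

theorem norm_inner_le_of_forall_mem_submodule (hT : Dense (T.domain : Set E))
    (K : Submodule 𝕜 F) [K.HasOrthogonalProjection] (hTK : ∀ a : T.domain, (T a : F) ∈ K)
    {y : F} (hy : y ∈ K) {C : ℝ}
    (h : ∀ u : T†.domain, (u : F) ∈ K → ‖⟪(u : F), y⟫‖ ≤ C * ‖T† u‖) (u : T†.domain) :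
    ‖⟪(u : F), y⟫‖ ≤ C * ‖T† u‖ := by
  have hw : (u : F) - K.starProjection u ∈ Kᗮ := K.sub_starProjection_mem_orthogonal u
  obtain ⟨hw_dom, hTw⟩ := exists_mem_adjoint_domain_apply_eq hT (x := 0) fun a => by
    rw [inner_zero_left, K.inner_left_of_mem_orthogonal (hTK a) hw]
  set p : T†.domain := u - ⟨_, hw_dom⟩
  have hp : (p : F) = K.starProjection u := sub_sub_cancel _ _
  have hTp : T† p = T† u := by rw [map_sub, hTw, sub_zero]
  have hpy : ⟪(p : F), y⟫ = ⟪(u : F), y⟫ := by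
    rw [Submodule.coe_sub, inner_sub_left, K.inner_left_of_mem_orthogonal hy hw, sub_zero]
  simpa [hpy, hTp] using h p (hp ▸ K.starProjection_apply_mem u)

end LinearPMap

open LinearPMap

theorem stmt_14_general {H₀ H₁ H₂ : Type*}
    [NormedAddCommGroup H₀] [InnerProductSpace ℂ H₀] [CompleteSpace H₀]
    [NormedAddCommGroup H₁] [InnerProductSpace ℂ H₁] [CompleteSpace H₁]
    [NormedAddCommGroup H₂] [InnerProductSpace ℂ H₂]
    (T : H₀ →ₗ.[ℂ] H₁) (S : H₁ →ₗ.[ℂ] H₂)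
    (hTdense : Dense (T.domain : Set H₀))
    (hTclosed : IsClosed (T.graph : Set (H₀ × H₁)))
    (hSclosed : IsClosed (S.graph : Set (H₁ × H₂)))
    (hST : ∀ x : T.domain, ∃ hx : (T x : H₁) ∈ S.domain, S ⟨T x, hx⟩ = 0)
    (α : H₁) (hα : ∃ hα' : α ∈ S.domain, S ⟨α, hα'⟩ = 0)
    (C : ℝ) (hC : 0 < C) :
    (∃ v : T.domain, T v = α ∧ ‖(v : H₀)‖ ≤ C) ↔
      ∀ u : H₁, ∀ hu₁ : u ∈ T.adjoint.domain, ∀ hu₂ : u ∈ S.domain,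
        ‖(inner ℂ u α : ℂ)‖ ^ 2 ≤
          C ^ 2 * (‖T.adjoint ⟨u, hu₁⟩‖ ^ 2 + ‖S ⟨u, hu₂⟩‖ ^ 2) := by
  set K : Submodule ℂ H₁ := S.graph.comap (LinearMap.inl ℂ H₁ H₂)
  have hK := S.mem_graph_comap_inl_iff
  have : CompleteSpace K :=
    (hSclosed.preimage (ContinuousLinearMap.inl ℂ H₁ H₂).continuous).completeSpace_coe
  rw [T.exists_apply_eq_and_norm_le_iff hTdense hTclosed α hC.le]
  constructor
  · intro h u hu₁ hu₂
    calc ‖(inner ℂ u α : ℂ)‖ ^ 2 ≤ C ^ 2 * ‖T† ⟨u, hu₁⟩‖ ^ 2 := by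
          rw [← mul_pow]; gcongr; exact h ⟨u, hu₁⟩
      _ ≤ C ^ 2 * (‖T† ⟨u, hu₁⟩‖ ^ 2 + ‖S ⟨u, hu₂⟩‖ ^ 2) := by
          gcongr; exact le_add_of_nonneg_right (sq_nonneg _)
  · intro h
    refine T.norm_inner_le_of_forall_mem_submodule hTdense K (fun a => (hK _).2 (hST a))
      ((hK α).2 hα) fun u hu => ?_
    obtain ⟨hu₂, hSu⟩ := (hK u).1 hu
    have := h u u.2 hu₂
    rw [hSu, norm_zero, zero_pow two_ne_zero, add_zero, ← mul_pow] at this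
    exact le_of_pow_le_pow_left₀ two_ne_zero (by positivity) this

/-- Hörmander's functional-analytic lemma (Proposition 2.19 of the paper): for closed,
densely defined operators `T : H₀ → H₁`, `S : H₁ → H₂` with `range T ⊆ ker S`, and
`α ∈ H₁` with `S α = 0`, there exists `v ∈ Dom T` with `T v = α` and `‖v‖ ≤ C` if and
only if `|⟨u, α⟩|² ≤ C²(‖T* u‖² + ‖S u‖²)` for all `u ∈ Dom T* ∩ Dom S`. -/
theorem stmt_14 {H₀ H₁ H₂ : Type*}
    [NormedAddCommGroup H₀] [InnerProductSpace ℂ H₀] [CompleteSpace H₀]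
    [NormedAddCommGroup H₁] [InnerProductSpace ℂ H₁] [CompleteSpace H₁]
    [NormedAddCommGroup H₂] [InnerProductSpace ℂ H₂] [CompleteSpace H₂]
    (T : H₀ →ₗ.[ℂ] H₁) (S : H₁ →ₗ.[ℂ] H₂)
    (hTdense : Dense (T.domain : Set H₀)) (hSdense : Dense (S.domain : Set H₁))
    (hTclosed : IsClosed (T.graph : Set (H₀ × H₁)))
    (hSclosed : IsClosed (S.graph : Set (H₁ × H₂)))
    (hST : ∀ x : T.domain, ∃ hx : (T x : H₁) ∈ S.domain, S ⟨T x, hx⟩ = 0)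
    (α : H₁) (hα : ∃ hα' : α ∈ S.domain, S ⟨α, hα'⟩ = 0)
    (C : ℝ) (hC : 0 < C) :
    (∃ v : T.domain, T v = α ∧ ‖(v : H₀)‖ ≤ C) ↔
      ∀ u : H₁, ∀ hu₁ : u ∈ T.adjoint.domain, ∀ hu₂ : u ∈ S.domain,
        ‖(inner ℂ u α : ℂ)‖ ^ 2 ≤
          C ^ 2 * (‖T.adjoint ⟨u, hu₁⟩‖ ^ 2 + ‖S ⟨u, hu₂⟩‖ ^ 2) :=
  stmt_14_general T S hTdense hTclosed hSclosed hST α hα C hC
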